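/- arXiv:1001.0529 — 8 statements merged into one kernel-verified Lean document; each statement's English description precedes it below -/
import Mathlib

section
/- Let X ∈ ℕ^{m×n}, let r ∈ {0,1}^k be any bit vector, and for i ∈ [k] let I_i(r) = [z_i+1, m−o_i], where z_i and o_i are the numbers of 0's and 1's among r_1,…,r_{i−1}. Then for every column λ ∈ [n]: (i) it is not the case that λ is increasing in I_i(r) for some i and decreasing in I_{i′}(r) for some i′; and (ii) for all indices i ≤ i″ ≤ i′ in [k], if λ is increasing in both I_i(r) and I_{i′}(r), then λ is increasing in I_{i″}(r), and likewise with 'increasing' replaced by 'decreasing'. (Hence, for fixed r, the steps at which a given column could be eliminated all have the same direction and form a contiguous block, which is what makes the induced bipartite matching problems convex.) -/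
/-!
The intervals `I_i(r) = [zᵢ + 1, m - oᵢ]` shrink as `i` grows, since `zᵢ` and `oᵢ` only
grow. A column increasing on an interval is monotone on it, hence weakly increasing on every
subinterval, so it cannot be decreasing there; and it keeps its unit steps on every
intermediate interval `I_{i''}(r)`, on whose endpoints the strict rise across the innermost
interval `I_{i'}(r)` forces a strict rise.
-/

/-- Column `k` of matrix `X` (with `m` rows, 1-indexed) is increasing in the interval
`[i,j] ⊆ [m]` (the predicate is false for degenerate intervals). -/
def ColIncr (m : ℕ) (X : ℕ → ℕ → ℕ) (k i j : ℕ) : Prop :=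
  1 ≤ i ∧ i ≤ j ∧ j ≤ m ∧ (∀ a, i ≤ a → a < j → X a k ≤ X (a + 1) k) ∧ X i k < X j k

/-- Column `k` is decreasing in the interval `[i,j] ⊆ [m]`. -/
def ColDecr (m : ℕ) (X : ℕ → ℕ → ℕ) (k i j : ℕ) : Prop :=
  1 ≤ i ∧ i ≤ j ∧ j ≤ m ∧ (∀ a, i ≤ a → a < j → X (a + 1) k ≤ X a k) ∧ X j k < X i k

/-- Number of `0`s (i.e. `false`) among `r₁,…,r_{i-1}`. -/
def zerosBefore {kk : ℕ} (r : Fin kk → Bool) (i : Fin kk) : ℕ :=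
  (Finset.univ.filter fun t : Fin kk => t < i ∧ r t = false).card

/-- Number of `1`s (i.e. `true`) among `r₁,…,r_{i-1}`. -/
def onesBefore {kk : ℕ} (r : Fin kk → Bool) (i : Fin kk) : ℕ :=
  (Finset.univ.filter fun t : Fin kk => t < i ∧ r t = true).card

lemma monotone_card_filter_lt {kk : ℕ} (p : Fin kk → Prop) [DecidablePred p] :
    Monotone fun i : Fin kk => (Finset.univ.filter fun t => t < i ∧ p t).card :=
  fun _ _ h => Finset.card_le_card fun t ht => by
    simp only [Finset.mem_filter, Finset.mem_univ, true_and] at ht ⊢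
    exact ⟨ht.1.trans_le h, ht.2⟩

lemma zerosBefore_mono {kk : ℕ} (r : Fin kk → Bool) : Monotone (zerosBefore r) :=
  monotone_card_filter_lt fun t => r t = false

lemma onesBefore_mono {kk : ℕ} (r : Fin kk → Bool) : Monotone (onesBefore r) :=
  monotone_card_filter_lt fun t => r t = true

lemma monotoneOn_Icc_of_le_add_one {α : Type*} [Preorder α] {f : ℕ → α} {a b : ℕ}
    (h : ∀ c, a ≤ c → c < b → f c ≤ f (c + 1)) : MonotoneOn f (Set.Icc a b) :=
  monotoneOn_of_le_add_one Set.ordConnected_Icc fun c _ hc hc' => h c hc.1 hc'.2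

lemma antitoneOn_Icc_of_add_one_le {α : Type*} [Preorder α] {f : ℕ → α} {a b : ℕ}
    (h : ∀ c, a ≤ c → c < b → f (c + 1) ≤ f c) : AntitoneOn f (Set.Icc a b) :=
  antitoneOn_of_add_one_le Set.ordConnected_Icc fun c _ hc hc' => h c hc.1 hc'.2

section Column

variable {m : ℕ} {X : ℕ → ℕ → ℕ} {k a b a' b' a'' b'' : ℕ}

lemma ColIncr.not_colDecr_of_subinterval (h : ColIncr m X k a b) (ha : a ≤ a') (hb : b' ≤ b) :
    ¬ ColDecr m X k a' b' := fun ⟨_, hab', _, _, hlt⟩ =>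
  hlt.not_ge <| monotoneOn_Icc_of_le_add_one h.2.2.2.1
    ⟨ha, hab'.trans hb⟩ ⟨ha.trans hab', hb⟩ hab'

lemma ColDecr.not_colIncr_of_subinterval (h : ColDecr m X k a b) (ha : a ≤ a') (hb : b' ≤ b) :
    ¬ ColIncr m X k a' b' := fun ⟨_, hab', _, _, hlt⟩ =>
  hlt.not_ge <| antitoneOn_Icc_of_add_one_le (f := fun c => X c k) h.2.2.2.1
    ⟨ha, hab'.trans hb⟩ ⟨ha.trans hab', hb⟩ hab'

lemma ColIncr.of_between (h : ColIncr m X k a b) (h' : ColIncr m X k a' b')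
    (ha : a ≤ a'') (ha' : a'' ≤ a') (hb' : b' ≤ b'') (hb : b'' ≤ b) :
    ColIncr m X k a'' b'' := by
  obtain ⟨ha₁, -, hbm, hstep, -⟩ := h
  obtain ⟨-, hab', -, -, hlt'⟩ := h'
  have hmono := monotoneOn_Icc_of_le_add_one hstep
  refine ⟨by omega, by omega, by omega, fun c hc hc' => hstep c (by omega) (by omega), ?_⟩
  calc X a'' k ≤ X a' k := hmono ⟨ha, by omega⟩ ⟨by omega, by omega⟩ ha'
    _ < X b' k := hlt'
    _ ≤ X b'' k := hmono ⟨by omega, by omega⟩ ⟨by omega, hb⟩ hb'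

lemma ColDecr.of_between (h : ColDecr m X k a b) (h' : ColDecr m X k a' b')
    (ha : a ≤ a'') (ha' : a'' ≤ a') (hb' : b' ≤ b'') (hb : b'' ≤ b) :
    ColDecr m X k a'' b'' := by
  obtain ⟨ha₁, -, hbm, hstep, -⟩ := h
  obtain ⟨-, hab', -, -, hlt'⟩ := h'
  have hanti := antitoneOn_Icc_of_add_one_le (f := fun c => X c k) hstep
  refine ⟨by omega, by omega, by omega, fun c hc hc' => hstep c (by omega) (by omega), ?_⟩
  calc X b'' k ≤ X b' k := hanti ⟨by omega, by omega⟩ ⟨by omega, hb⟩ hb'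
    _ < X a' k := hlt'
    _ ≤ X a'' k := hanti ⟨ha, by omega⟩ ⟨by omega, by omega⟩ ha'

end Column

theorem fixed_direction_and_convexity_general
    (m : ℕ) (X : ℕ → ℕ → ℕ) (kk : ℕ) (r : Fin kk → Bool)
    (lam : ℕ) :
    (¬ ∃ i i' : Fin kk,
        ColIncr m X lam (zerosBefore r i + 1) (m - onesBefore r i) ∧
        ColDecr m X lam (zerosBefore r i' + 1) (m - onesBefore r i')) ∧
    (∀ i i'' i' : Fin kk, i ≤ i'' → i'' ≤ i' →
      (ColIncr m X lam (zerosBefore r i + 1) (m - onesBefore r i) →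
       ColIncr m X lam (zerosBefore r i' + 1) (m - onesBefore r i') →
       ColIncr m X lam (zerosBefore r i'' + 1) (m - onesBefore r i'')) ∧
      (ColDecr m X lam (zerosBefore r i + 1) (m - onesBefore r i) →
       ColDecr m X lam (zerosBefore r i' + 1) (m - onesBefore r i') →
       ColDecr m X lam (zerosBefore r i'' + 1) (m - onesBefore r i''))) := by
  have nested {i i' : Fin kk} (h : i ≤ i') :
      zerosBefore r i + 1 ≤ zerosBefore r i' + 1 ∧ m - onesBefore r i' ≤ m - onesBefore r i :=
    ⟨Nat.add_le_add_right (zerosBefore_mono r h) 1, Nat.sub_le_sub_left (onesBefore_mono r h) m⟩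
  refine ⟨?_, fun i i'' i' h₁ h₂ => ?_⟩
  · rintro ⟨i, i', hI, hD⟩
    rcases le_total i i' with h | h
    · exact hI.not_colDecr_of_subinterval (nested h).1 (nested h).2 hD
    · exact hD.not_colIncr_of_subinterval (nested h).1 (nested h).2 hI
  · obtain ⟨ha, hb⟩ := nested h₁
    obtain ⟨ha', hb'⟩ := nested h₂
    exact ⟨fun hI hI' => hI.of_between hI' ha ha' hb' hb,
      fun hD hD' => hD.of_between hD' ha ha' hb' hb⟩

/-- For a fixed bit vector `r` and the induced intervals `I_i(r) = [zᵢ+1, m-oᵢ]`: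
(i) no column is increasing in some `I_i(r)` and decreasing in some `I_{i'}(r)`, and
(ii) the indices where a column is increasing (resp. decreasing) form a contiguous block. -/
theorem fixed_direction_and_convexity
    (m n : ℕ) (X : ℕ → ℕ → ℕ) (kk : ℕ) (r : Fin kk → Bool)
    (lam : ℕ) (hlam : lam ∈ Finset.Icc 1 n) :
    (¬ ∃ i i' : Fin kk,
        ColIncr m X lam (zerosBefore r i + 1) (m - onesBefore r i) ∧
        ColDecr m X lam (zerosBefore r i' + 1) (m - onesBefore r i')) ∧
    (∀ i i'' i' : Fin kk, i ≤ i'' → i'' ≤ i' →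
      (ColIncr m X lam (zerosBefore r i + 1) (m - onesBefore r i) →
       ColIncr m X lam (zerosBefore r i' + 1) (m - onesBefore r i') →
       ColIncr m X lam (zerosBefore r i'' + 1) (m - onesBefore r i'')) ∧
      (ColDecr m X lam (zerosBefore r i + 1) (m - onesBefore r i) →
       ColDecr m X lam (zerosBefore r i' + 1) (m - onesBefore r i') →
       ColDecr m X lam (zerosBefore r i'' + 1) (m - onesBefore r i''))) :=
  fixed_direction_and_convexity_general m X kk r lam
end

section
/- A column λ ∈ [n] of X ∈ ℕ^{m×n} is eliminable (i.e., occurs in some elimination sequence for X) if and only if there exists an elimination sequence (c,r) for X, of some length k ≥ 0, such that λ does not occur among c_1,…,c_k and column λ is active in the remaining interval [z+1, m−o], where z and o are the numbers of 0's and 1's among r_1,…,r_k. -/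
/-- `(c, r)` is an elimination sequence (of length `kk`) for the matrix `X ∈ ℕ^{m×n}`:
`c` has pairwise distinct entries in `[n]`, and at each step `i`, if `r i = 0` then
column `c i` is increasing in `[zᵢ+1, m-oᵢ]`, and if `r i = 1` then column `c i`
is decreasing in `[zᵢ+1, m-oᵢ]`. -/
def IsElimSeq (m n : ℕ) (X : ℕ → ℕ → ℕ) {kk : ℕ} (c : Fin kk → ℕ) (r : Fin kk → Bool) : Prop :=
  (∀ i, c i ∈ Finset.Icc 1 n) ∧ Function.Injective c ∧
  ∀ i : Fin kk,
    (r i = false → ColIncr m X (c i) (zerosBefore r i + 1) (m - onesBefore r i)) ∧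
    (r i = true → ColDecr m X (c i) (zerosBefore r i + 1) (m - onesBefore r i))


/-- Column `k` is active in `[i,j]`: increasing or decreasing there. -/
def ColActive (m : ℕ) (X : ℕ → ℕ → ℕ) (k i j : ℕ) : Prop :=
  ColIncr m X k i j ∨ ColDecr m X k i j

/-- Column `lam` is eliminable: it occurs in some elimination sequence for `X`. -/
def Eliminable (m n : ℕ) (X : ℕ → ℕ → ℕ) (lam : ℕ) : Prop :=
  ∃ (kk : ℕ) (c : Fin kk → ℕ) (r : Fin kk → Bool),
    IsElimSeq m n X c r ∧ ∃ i, c i = lam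

open Finset

section Counting

variable {a kk : ℕ}

lemma card_filter_comp_castLE (h : a ≤ kk) (q : Fin kk → Prop) [DecidablePred q]
    (hq : ∀ t, q t → (t : ℕ) < a) :
    #{t : Fin a | q (Fin.castLE h t)} = #{t : Fin kk | q t} := by
  refine card_bij (fun t _ => Fin.castLE h t) (by simp)
    (fun _ _ _ _ hxy => Fin.castLE_injective h hxy) fun t ht => ?_
  simp only [mem_filter, mem_univ, true_and] at ht
  exact ⟨⟨t, hq t ht⟩, by simpa using ht, rfl⟩

lemma card_filter_lt_comp_castLE (h : a ≤ kk) (r : Fin kk → Bool) (j : Fin a) (b : Bool) :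
    #{t : Fin a | t < j ∧ r (Fin.castLE h t) = b}
      = #{t : Fin kk | t < Fin.castLE h j ∧ r t = b} :=
  card_filter_comp_castLE h (fun t => t < Fin.castLE h j ∧ r t = b)
    fun _ ht => (Fin.lt_def.mp ht.1).trans j.isLt

lemma card_filter_lt_eq_card_prefix (r : Fin kk → Bool) (i : Fin kk) (b : Bool) :
    #{t : Fin kk | t < i ∧ r t = b} = #{t : Fin i | r (Fin.castLE i.isLt.le t) = b} := by
  rw [← card_filter_comp_castLE i.isLt.le _ fun _ ht => ht.1]
  simp [Fin.lt_def]

lemma card_filter_lt_snoc_castSucc (r : Fin kk → Bool) (b' : Bool) (j : Fin kk) (b : Bool) :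
    #{t : Fin (kk + 1) | t < j.castSucc ∧ (Fin.snoc r b' : Fin (kk + 1) → Bool) t = b}
      = #{t : Fin kk | t < j ∧ r t = b} := by
  refine (card_filter_lt_comp_castLE kk.le_succ _ j b).symm.trans ?_
  exact congrArg (fun r' => #{t : Fin kk | t < j ∧ r' t = b}) Fin.snoc_comp_castSucc

lemma card_filter_lt_snoc_last (r : Fin kk → Bool) (b' b : Bool) :
    #{t : Fin (kk + 1) | t < Fin.last kk ∧ (Fin.snoc r b' : Fin (kk + 1) → Bool) t = b}
      = #{t : Fin kk | r t = b} := by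
  rw [card_filter_lt_eq_card_prefix]
  exact congrArg (fun r' => #{t : Fin kk | r' t = b}) Fin.snoc_comp_castSucc

end Counting

lemma colActive_iff_exists_bool {m : ℕ} {X : ℕ → ℕ → ℕ} {k i j : ℕ} :
    ColActive m X k i j ↔
      ∃ b : Bool, (b = false → ColIncr m X k i j) ∧ (b = true → ColDecr m X k i j) := by
  constructor
  · rintro (h | h)
    exacts [⟨false, fun _ => h, nofun⟩, ⟨true, nofun, fun _ => h⟩]
  · rintro ⟨(_ | _), hincr, hdecr⟩
    exacts [Or.inl (hincr rfl), Or.inr (hdecr rfl)]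

namespace IsElimSeq

variable {m n : ℕ} {X : ℕ → ℕ → ℕ} {kk : ℕ} {c : Fin kk → ℕ} {r : Fin kk → Bool}

theorem comp_castLE (hs : IsElimSeq m n X c r) {a : ℕ} (h : a ≤ kk) :
    IsElimSeq m n X (c ∘ Fin.castLE h) (r ∘ Fin.castLE h) := by
  obtain ⟨hmem, hinj, hstep⟩ := hs
  refine ⟨fun t => hmem _, hinj.comp (Fin.castLE_injective h), fun j => ?_⟩
  simp only [zerosBefore, onesBefore, Function.comp_apply, card_filter_lt_comp_castLE]
  exact hstep _

theorem snoc (hs : IsElimSeq m n X c r) {x : ℕ} (hx : x ∈ Icc 1 n) (hfresh : x ∉ Set.range c)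
    {b : Bool}
    (hb : (b = false → ColIncr m X x (#{t | r t = false} + 1) (m - #{t | r t = true})) ∧
      (b = true → ColDecr m X x (#{t | r t = false} + 1) (m - #{t | r t = true}))) :
    IsElimSeq m n X (Fin.snoc c x) (Fin.snoc r b) := by
  obtain ⟨hmem, hinj, hstep⟩ := hs
  refine ⟨fun i => Fin.lastCases ?_ (fun j => ?_) i, Fin.snoc_injective_of_injective hinj hfresh,
    fun i => Fin.lastCases ?_ (fun j => ?_) i⟩
  · simpa using hx
  · simpa using hmem j
  · simpa only [zerosBefore, onesBefore, Fin.snoc_last, card_filter_lt_snoc_last] using hb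
  · simpa only [zerosBefore, onesBefore, Fin.snoc_castSucc, card_filter_lt_snoc_castSucc]
      using hstep j

end IsElimSeq

/-- A column `lam ∈ [n]` of `X ∈ ℕ^{m×n}` is eliminable iff there is an elimination
sequence `(c, r)` not containing `lam` such that `lam` is active in the remaining interval
`[z+1, m-o]`, where `z` and `o` count the `0`s and `1`s in all of `r`. -/
theorem eliminable_iff_active_after_some_seq
    (m n : ℕ) (X : ℕ → ℕ → ℕ) (lam : ℕ) (hlam : lam ∈ Finset.Icc 1 n) :
    Eliminable m n X lam ↔
      ∃ (kk : ℕ) (c : Fin kk → ℕ) (r : Fin kk → Bool),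
        IsElimSeq m n X c r ∧ (∀ i, c i ≠ lam) ∧
        ColActive m X lam
          ((Finset.univ.filter fun t : Fin kk => r t = false).card + 1)
          (m - (Finset.univ.filter fun t : Fin kk => r t = true).card) := by
  constructor
  · rintro ⟨kk, c, r, hs, i, rfl⟩
    refine ⟨i, c ∘ Fin.castLE i.isLt.le, r ∘ Fin.castLE i.isLt.le, hs.comp_castLE _,
      fun t h => t.isLt.ne (congrArg Fin.val (hs.2.1 h)), ?_⟩
    simp only [Function.comp_apply, ← card_filter_lt_eq_card_prefix]
    exact colActive_iff_exists_bool.2 ⟨r i, hs.2.2 i⟩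
  · rintro ⟨kk, c, r, hs, hfresh, hact⟩
    obtain ⟨b, hb⟩ := colActive_iff_exists_bool.1 hact
    exact ⟨kk + 1, _, _, hs.snoc hlam (fun ⟨i, hi⟩ => hfresh i hi) hb, Fin.last kk,
      Fin.snoc_last _ _⟩
end

section
/- Let X ∈ ℕ^{m×n} with m ≥ 1, and let (G_X, σ_X) be the labeled complete (m−1)×(m−1) layered grid graph induced by X. Then for every k ≥ 0, X has an elimination sequence of length k if and only if there is a matched path of length k in (G_X, σ_X) starting at the vertex (0,0). -/
/-- `(u,v)` is a south edge: `v = (u₁+1, u₂)`. -/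
def IsSouth (u v : ℕ × ℕ) : Prop := v = (u.1 + 1, u.2)

/-- `(u,v)` is an east edge: `v = (u₁, u₂+1)`. -/
def IsEast (u v : ℕ × ℕ) : Prop := v = (u.1, u.2 + 1)

/-- Edge relation of the complete `M × N` layered grid graph on `{0,…,M} × {0,…,N}`. -/
def GridEdge (M N : ℕ) (u v : ℕ × ℕ) : Prop :=
  (u.1 < M ∧ u.2 ≤ N ∧ IsSouth u v) ∨ (u.1 ≤ M ∧ u.2 < N ∧ IsEast u v)

/-- The labeling function `σ_X` induced by `X ∈ ℕ^{m×n}` on the complete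
`(m-1) × (m-1)` layered grid graph: a south edge `((i,j),(i+1,j))` is labeled with the
columns of `X` increasing in `[i+1, m-j]`, and an east edge `((i,j),(i,j+1))` with the
columns decreasing in `[i+1, m-j]`. -/
def sigmaX (m n : ℕ) (X : ℕ → ℕ → ℕ) (u v : ℕ × ℕ) : Set ℕ :=
  {lam | lam ∈ Finset.Icc 1 n ∧
    ((IsSouth u v ∧ ColIncr m X lam (u.1 + 1) (m - u.2)) ∨
     (IsEast u v ∧ ColDecr m X lam (u.1 + 1) (m - u.2)))}

/-- There is a matched path of length `k` in the labeled complete `M × N` layered grid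
graph `(G, σ)` starting at `v₀`: a path `v₀, v₁, …, v_k` along edges, together with an
injective assignment of a label to each step, each chosen from that edge's label set. -/
def MatchedPathFrom (M N : ℕ) (σ : ℕ × ℕ → ℕ × ℕ → Set ℕ) (v₀ : ℕ × ℕ) (k : ℕ) : Prop :=
  ∃ (v : Fin (k + 1) → ℕ × ℕ) (f : Fin k → ℕ),
    v 0 = v₀ ∧
    (∀ t : Fin k, GridEdge M N (v t.castSucc) (v t.succ)) ∧
    Function.Injective f ∧
    (∀ t : Fin k, f t ∈ σ (v t.castSucc) (v t.succ))

def cntB {k : ℕ} (r : Fin k → Bool) (b : Bool) (i : ℕ) : ℕ :=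
  (Finset.univ.filter fun t : Fin k => (t : ℕ) < i ∧ r t = b).card

lemma cntB_zero {k : ℕ} (r : Fin k → Bool) (b : Bool) : cntB r b 0 = 0 := by
  simp [cntB]

lemma cntB_succ {k : ℕ} (r : Fin k → Bool) (b : Bool) (i : ℕ) (h : i < k) :
    cntB r b (i + 1) = cntB r b i + (if r ⟨i, h⟩ = b then 1 else 0) := by
  classical
  have hsplit : (Finset.univ.filter fun t : Fin k => (t : ℕ) < i + 1 ∧ r t = b)
      = (Finset.univ.filter fun t : Fin k => (t : ℕ) < i ∧ r t = b)
        ∪ (Finset.univ.filter fun t : Fin k => t = ⟨i, h⟩ ∧ r t = b) := by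
    ext t
    simp only [Finset.mem_filter, Finset.mem_union, Finset.mem_univ, true_and]
    constructor
    · rintro ⟨ht, hb⟩
      rcases Nat.lt_succ_iff_lt_or_eq.mp ht with h' | h'
      · exact Or.inl ⟨h', hb⟩
      · exact Or.inr ⟨Fin.ext h', hb⟩
    · rintro (⟨ht, hb⟩ | ⟨ht, hb⟩)
      · exact ⟨Nat.lt_succ_of_lt ht, hb⟩
      · refine ⟨?_, hb⟩; rw [ht]; exact Nat.lt_succ_self i
  have hdisj : Disjoint
      (Finset.univ.filter fun t : Fin k => (t : ℕ) < i ∧ r t = b)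
      (Finset.univ.filter fun t : Fin k => t = ⟨i, h⟩ ∧ r t = b) := by
    rw [Finset.disjoint_left]
    rintro t ht ht'
    simp only [Finset.mem_filter, Finset.mem_univ, true_and] at ht ht'
    rw [ht'.1] at ht
    exact absurd ht.1 (lt_irrefl i)
  rw [cntB, cntB, hsplit, Finset.card_union_of_disjoint hdisj]
  congr 1
  by_cases hb : r ⟨i, h⟩ = b
  · rw [if_pos hb]
    have : (Finset.univ.filter fun t : Fin k => t = ⟨i, h⟩ ∧ r t = b) = {⟨i, h⟩} := by
      ext t
      simp only [Finset.mem_filter, Finset.mem_univ, true_and, Finset.mem_singleton]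
      exact ⟨fun ht => ht.1, fun ht => by subst ht; exact ⟨rfl, hb⟩⟩
    rw [this, Finset.card_singleton]
  · rw [if_neg hb]
    have : (Finset.univ.filter fun t : Fin k => t = ⟨i, h⟩ ∧ r t = b) = ∅ := by
      ext t
      simp only [Finset.mem_filter, Finset.mem_univ, true_and, Finset.notMem_empty, iff_false]
      rintro ⟨rfl, hb'⟩; exact hb hb'
    rw [this, Finset.card_empty]

lemma zerosBefore_eq_cntB {k : ℕ} (r : Fin k → Bool) (i : Fin k) :
    zerosBefore r i = cntB r false i.val := rfl

lemma onesBefore_eq_cntB {k : ℕ} (r : Fin k → Bool) (i : Fin k) :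
    onesBefore r i = cntB r true i.val := rfl

/-- `X ∈ ℕ^{m×n}` (with `m ≥ 1`) has an elimination sequence of length `k` iff there is a
matched path of length `k` in the induced labeled layered grid graph `(G_X, σ_X)`
starting at `(0,0)`. -/
theorem elimSeq_iff_matchedPath (m n : ℕ) (hm : 1 ≤ m) (X : ℕ → ℕ → ℕ) (k : ℕ) :
    (∃ (c : Fin k → ℕ) (r : Fin k → Bool), IsElimSeq m n X c r) ↔
      MatchedPathFrom (m - 1) (m - 1) (sigmaX m n X) (0, 0) k := by
  constructor
  · rintro ⟨c, r, hc, hinj, hstep⟩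
    set v : Fin (k + 1) → ℕ × ℕ := fun s => (cntB r false s.val, cntB r true s.val) with hv
    have key : ∀ t : Fin k, GridEdge (m - 1) (m - 1) (v t.castSucc) (v t.succ) ∧
        c t ∈ sigmaX m n X (v t.castSucc) (v t.succ) := by
      intro t
      have hcs : v t.castSucc = (cntB r false t.val, cntB r true t.val) := rfl
      have h1 := cntB_succ r false t.val t.isLt
      have h2 := cntB_succ r true t.val t.isLt
      rw [Fin.eta] at h1 h2
      cases hr : r t with
      | false =>
        have hI := (hstep t).1 hr
        rw [zerosBefore_eq_cntB, onesBefore_eq_cntB] at hI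
        obtain ⟨-, hle, hub, -, hx⟩ := id hI
        have hlt : cntB r false t.val + 1 < m - cntB r true t.val := by
          rcases lt_or_eq_of_le hle with h | h
          · exact h
          · rw [h] at hx; exact absurd hx (lt_irrefl _)
        have hvs : v t.succ = (cntB r false t.val + 1, cntB r true t.val) := by
          simp [hv, Fin.val_succ, h1, h2, hr]
        rw [hcs, hvs]
        constructor
        · left; exact ⟨by omega, by omega, rfl⟩
        · exact ⟨hc t, Or.inl ⟨rfl, hI⟩⟩
      | true =>
        have hD := (hstep t).2 hr
        rw [zerosBefore_eq_cntB, onesBefore_eq_cntB] at hD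
        obtain ⟨-, hle, hub, -, hx⟩ := id hD
        have hlt : cntB r false t.val + 1 < m - cntB r true t.val := by
          rcases lt_or_eq_of_le hle with h | h
          · exact h
          · rw [h] at hx; exact absurd hx (lt_irrefl _)
        have hvs : v t.succ = (cntB r false t.val, cntB r true t.val + 1) := by
          simp [hv, Fin.val_succ, h1, h2, hr]
        rw [hcs, hvs]
        constructor
        · right; exact ⟨by omega, by omega, rfl⟩
        · exact ⟨hc t, Or.inr ⟨rfl, hD⟩⟩
    refine ⟨v, c, ?_, fun t => (key t).1, hinj, fun t => (key t).2⟩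
    simp [hv, cntB_zero]
  · rintro ⟨v, f, hv0, hedge, hinj, hlab⟩
    classical
    set r : Fin k → Bool := fun t => decide ((v t.succ).2 = (v t.castSucc).2 + 1) with hr_def
    have hinv : ∀ s : Fin (k + 1), v s = (cntB r false s.val, cntB r true s.val) := by
      intro s
      induction s using Fin.induction with
      | zero => rw [hv0]; simp [cntB_zero]
      | succ i ih =>
        have h1 := cntB_succ r false i.val i.isLt
        have h2 := cntB_succ r true i.val i.isLt
        rw [Fin.eta] at h1 h2
        rcases hedge i with ⟨-, -, hs⟩ | ⟨-, -, he⟩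
        · have hri : r i = false := by
            simp only [hr_def]
            rw [hs]
            simp
          rw [hs, ih]
          simp [Fin.val_succ, h1, h2, hri]
        · have hri : r i = true := by
            simp only [hr_def]
            rw [he]
            simp
          rw [he, ih]
          simp [Fin.val_succ, h1, h2, hri]
    refine ⟨f, r, fun i => (hlab i).1, hinj, ?_⟩
    intro i
    constructor
    · intro hri
      rcases (hlab i).2 with ⟨hs, hI⟩ | ⟨he, hD⟩
      · rw [zerosBefore_eq_cntB, onesBefore_eq_cntB]
        rw [hinv i.castSucc] at hI
        exact hI
      · exfalso
        have : r i = true := by simp only [hr_def]; rw [he]; simp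
        rw [this] at hri; exact Bool.noConfusion hri
    · intro hri
      rcases (hlab i).2 with ⟨hs, hI⟩ | ⟨he, hD⟩
      · exfalso
        have : r i = false := by simp only [hr_def]; rw [hs]; simp
        rw [this] at hri; exact Bool.noConfusion hri
      · rw [zerosBefore_eq_cntB, onesBefore_eq_cntB]
        rw [hinv i.castSucc] at hD
        exact hD
end

section
/- For every matrix X ∈ ℕ^{m×n} with m ≥ 1, the labeling function σ_X of the induced labeled layered grid graph (G_X, σ_X) is directed convex. -/
/-- A labeling `σ` of the complete `M × N` layered grid graph is directed convex: for every
label and every three edges `e₁, e₂, e₃` whose tails are successively reachable, if the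
label is on `e₁` and `e₃`, then `e₁` and `e₃` have the same direction, and the label is on
`e₂` iff `e₂` has that same direction. -/
def DirectedConvex (M N : ℕ) (σ : ℕ × ℕ → ℕ × ℕ → Set ℕ) : Prop :=
  ∀ (lam : ℕ) (u₁ v₁ u₂ v₂ u₃ v₃ : ℕ × ℕ),
    GridEdge M N u₁ v₁ → GridEdge M N u₂ v₂ → GridEdge M N u₃ v₃ →
    Relation.ReflTransGen (GridEdge M N) u₁ u₂ →
    Relation.ReflTransGen (GridEdge M N) u₂ u₃ →
    lam ∈ σ u₁ v₁ → lam ∈ σ u₃ v₃ →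
    (IsSouth u₁ v₁ ↔ IsSouth u₃ v₃) ∧
    (lam ∈ σ u₂ v₂ ↔ (IsSouth u₂ v₂ ↔ IsSouth u₁ v₁))

/-! An edge with tail `(i, j)` carries labels from the row interval `[i+1, m-j]`, and moving
forward in the grid only shrinks this interval. A column that rises weakly on an interval cannot
fall strictly on a subinterval (and vice versa): this forces `e₁` and `e₃` to have the same
direction and keeps the label off `e₂` in the other direction. A column that rises weakly on `I₁`
and strictly across `I₃ ⊆ I₁` rises strictly across every `I₂` between them, which puts the label
on `e₂` in the common direction. -/

lemma IsSouth.not_isEast {u v : ℕ × ℕ} (hs : IsSouth u v) : ¬IsEast u v := by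
  unfold IsSouth IsEast at *
  simp [hs]

lemma GridEdge.isEast_iff_not_isSouth {M N : ℕ} {u v : ℕ × ℕ} (h : GridEdge M N u v) :
    IsEast u v ↔ ¬IsSouth u v := by
  rcases h with ⟨-, -, hs⟩ | ⟨-, -, he⟩
  · exact iff_of_false hs.not_isEast (not_not_intro hs)
  · exact iff_of_true he fun hs => hs.not_isEast he

lemma GridEdge.le {M N : ℕ} {u v : ℕ × ℕ} (h : GridEdge M N u v) : u ≤ v := by
  rcases h with ⟨-, -, rfl⟩ | ⟨-, -, rfl⟩ <;> simp [Prod.le_def]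

lemma GridEdge.le_of_reflTransGen {M N : ℕ} {u v : ℕ × ℕ}
    (h : Relation.ReflTransGen (GridEdge M N) u v) : u ≤ v := by
  simpa [Relation.reflTransGen_eq_self] using
    Relation.ReflTransGen.mono (fun _ _ => GridEdge.le) _ _ h

section Columns

variable {m : ℕ} {X : ℕ → ℕ → ℕ} {k i₁ j₁ i₂ j₂ i₃ j₃ : ℕ}

lemma ColIncr.monotoneOn (h : ColIncr m X k i₁ j₁) : MonotoneOn (X · k) (Set.Icc i₁ j₁) :=
  monotoneOn_of_le_add_one Set.ordConnected_Icc fun a _ ha ha' => h.2.2.2.1 a ha.1 ha'.2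

lemma ColDecr.antitoneOn (h : ColDecr m X k i₁ j₁) : AntitoneOn (X · k) (Set.Icc i₁ j₁) :=
  antitoneOn_of_add_one_le Set.ordConnected_Icc fun a _ ha ha' => h.2.2.2.1 a ha.1 ha'.2

lemma ColIncr.not_colDecr (h₁ : ColIncr m X k i₁ j₁) (hi : i₁ ≤ i₂) (hj : j₂ ≤ j₁) :
    ¬ColDecr m X k i₂ j₂ := fun ⟨_, hij, _, _, hlt⟩ =>
  (h₁.monotoneOn ⟨hi, hij.trans hj⟩ ⟨hi.trans hij, hj⟩ hij).not_gt hlt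

lemma ColDecr.not_colIncr (h₁ : ColDecr m X k i₁ j₁) (hi : i₁ ≤ i₂) (hj : j₂ ≤ j₁) :
    ¬ColIncr m X k i₂ j₂ := fun ⟨_, hij, _, _, hlt⟩ =>
  (h₁.antitoneOn ⟨hi, hij.trans hj⟩ ⟨hi.trans hij, hj⟩ hij).not_gt hlt

lemma ColIncr.of_between_s6 (h₁ : ColIncr m X k i₁ j₁) (h₃ : ColIncr m X k i₃ j₃)
    (hi₁₂ : i₁ ≤ i₂) (hi₂₃ : i₂ ≤ i₃) (hj₃₂ : j₃ ≤ j₂) (hj₂₁ : j₂ ≤ j₁) :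
    ColIncr m X k i₂ j₂ := by
  have hmono := h₁.monotoneOn
  obtain ⟨hi₁, -, hj₁, hstep, -⟩ := h₁
  obtain ⟨-, hij₃, -, -, hlt⟩ := h₃
  refine ⟨hi₁.trans hi₁₂, (hi₂₃.trans hij₃).trans hj₃₂, hj₂₁.trans hj₁,
    fun a ha haj => hstep a (hi₁₂.trans ha) (haj.trans_le hj₂₁), ?_⟩
  calc X i₂ k ≤ X i₃ k := hmono ⟨hi₁₂, by omega⟩ ⟨by omega, by omega⟩ hi₂₃
    _ < X j₃ k := hlt
    _ ≤ X j₂ k := hmono ⟨by omega, by omega⟩ ⟨by omega, hj₂₁⟩ hj₃₂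

lemma ColDecr.of_between_s6 (h₁ : ColDecr m X k i₁ j₁) (h₃ : ColDecr m X k i₃ j₃)
    (hi₁₂ : i₁ ≤ i₂) (hi₂₃ : i₂ ≤ i₃) (hj₃₂ : j₃ ≤ j₂) (hj₂₁ : j₂ ≤ j₁) :
    ColDecr m X k i₂ j₂ := by
  have hanti := h₁.antitoneOn
  obtain ⟨hi₁, -, hj₁, hstep, -⟩ := h₁
  obtain ⟨-, hij₃, -, -, hlt⟩ := h₃
  refine ⟨hi₁.trans hi₁₂, (hi₂₃.trans hij₃).trans hj₃₂, hj₂₁.trans hj₁,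
    fun a ha haj => hstep a (hi₁₂.trans ha) (haj.trans_le hj₂₁), ?_⟩
  calc X j₂ k ≤ X j₃ k := hanti ⟨by omega, by omega⟩ ⟨by omega, hj₂₁⟩ hj₃₂
    _ < X i₃ k := hlt
    _ ≤ X i₂ k := hanti ⟨hi₁₂, by omega⟩ ⟨by omega, by omega⟩ hi₂₃

end Columns

section Labels

variable {m n : ℕ} {X : ℕ → ℕ → ℕ} {lam : ℕ} {u₁ u₂ u₃ v₂ : ℕ × ℕ}

lemma mem_sigmaX_iff_isSouth_of_colIncr (hlam : lam ∈ Finset.Icc 1 n)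
    (h₁ : ColIncr m X lam (u₁.1 + 1) (m - u₁.2)) (h₃ : ColIncr m X lam (u₃.1 + 1) (m - u₃.2))
    (h₁₂ : u₁ ≤ u₂) (h₂₃ : u₂ ≤ u₃) :
    lam ∈ sigmaX m n X u₂ v₂ ↔ IsSouth u₂ v₂ := by
  obtain ⟨hu₁₂, hv₁₂⟩ := Prod.le_def.mp h₁₂
  obtain ⟨hu₂₃, hv₂₃⟩ := Prod.le_def.mp h₂₃
  constructor
  · rintro ⟨-, ⟨hs, -⟩ | ⟨-, hdec⟩⟩
    · exact hs
    · exact absurd hdec (h₁.not_colDecr (by omega) (by omega))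
  · exact fun hs => ⟨hlam, .inl ⟨hs, h₁.of_between_s6 h₃ (by omega) (by omega) (by omega) (by omega)⟩⟩

lemma mem_sigmaX_iff_isEast_of_colDecr (hlam : lam ∈ Finset.Icc 1 n)
    (h₁ : ColDecr m X lam (u₁.1 + 1) (m - u₁.2)) (h₃ : ColDecr m X lam (u₃.1 + 1) (m - u₃.2))
    (h₁₂ : u₁ ≤ u₂) (h₂₃ : u₂ ≤ u₃) :
    lam ∈ sigmaX m n X u₂ v₂ ↔ IsEast u₂ v₂ := by
  obtain ⟨hu₁₂, hv₁₂⟩ := Prod.le_def.mp h₁₂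
  obtain ⟨hu₂₃, hv₂₃⟩ := Prod.le_def.mp h₂₃
  constructor
  · rintro ⟨-, ⟨-, hinc⟩ | ⟨he, -⟩⟩
    · exact absurd hinc (h₁.not_colIncr (by omega) (by omega))
    · exact he
  · exact fun he => ⟨hlam, .inr ⟨he, h₁.of_between_s6 h₃ (by omega) (by omega) (by omega) (by omega)⟩⟩

end Labels

theorem sigmaX_directedConvex_general (m n : ℕ) (X : ℕ → ℕ → ℕ) :
    DirectedConvex (m - 1) (m - 1) (sigmaX m n X) := by
  rintro lam u₁ v₁ u₂ v₂ u₃ v₃ - he₂ - h₁₂ h₂₃ ⟨hlam, hl₁⟩ ⟨-, hl₃⟩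
  replace h₁₂ := GridEdge.le_of_reflTransGen h₁₂
  replace h₂₃ := GridEdge.le_of_reflTransGen h₂₃
  obtain ⟨hu₁₃, hv₁₃⟩ := Prod.le_def.mp (h₁₂.trans h₂₃)
  rcases hl₁ with ⟨hs₁, hinc₁⟩ | ⟨he₁, hdec₁⟩ <;> rcases hl₃ with ⟨hs₃, hinc₃⟩ | ⟨he₃, hdec₃⟩
  · exact ⟨iff_of_true hs₁ hs₃, (mem_sigmaX_iff_isSouth_of_colIncr hlam hinc₁ hinc₃ h₁₂ h₂₃).trans
      (iff_true_right hs₁).symm⟩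
  · exact absurd hdec₃ (hinc₁.not_colDecr (by omega) (by omega))
  · exact absurd hinc₃ (hdec₁.not_colIncr (by omega) (by omega))
  · have hns₁ : ¬IsSouth u₁ v₁ := fun hs => hs.not_isEast he₁
    exact ⟨iff_of_false hns₁ (fun hs => hs.not_isEast he₃),
      (mem_sigmaX_iff_isEast_of_colDecr hlam hdec₁ hdec₃ h₁₂ h₂₃).trans
        (he₂.isEast_iff_not_isSouth.trans (iff_false_right hns₁).symm)⟩

/-- For every matrix `X ∈ ℕ^{m×n}` with `m ≥ 1`, the labeling `σ_X` of the induced labeled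
layered grid graph is directed convex. -/
theorem sigmaX_directedConvex (m n : ℕ) (hm : 1 ≤ m) (X : ℕ → ℕ → ℕ) :
    DirectedConvex (m - 1) (m - 1) (sigmaX m n X) :=
  sigmaX_directedConvex_general m n X
end

section
/- Let G be a complete M×N layered grid graph with M, N ≥ 1, Σ a finite alphabet, and σ a labeling of the edges of G with subsets of Σ that is directed convex and backward closed. Then for every label λ ∈ Σ, all edges whose label set contains λ have the same direction; in particular, no label appears both on a south edge and on an east edge. -/
/-! Every edge of the grid is reachable from the origin, and backward closedness puts each label
on an edge leaving the origin. Directed convexity, applied to that edge and any later edge with the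
same label, forces the two edges to have the same direction. -/

namespace GridEdge

variable {M N : ℕ}

theorem source_le {u v : ℕ × ℕ} (h : GridEdge M N u v) : u.1 ≤ M ∧ u.2 ≤ N := by
  rcases h with ⟨h1, h2, -⟩ | ⟨h1, h2, -⟩
  · exact ⟨h1.le, h2⟩
  · exact ⟨h1, h2.le⟩

theorem reflTransGen_south (a b k : ℕ) (hak : a + k ≤ M) (hb : b ≤ N) :
    Relation.ReflTransGen (GridEdge M N) (a, b) (a + k, b) := by
  induction k with
  | zero => exact .refl
  | succ k ih => exact (ih (by omega)).tail (Or.inl ⟨by omega, hb, rfl⟩)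

theorem reflTransGen_east (a b k : ℕ) (ha : a ≤ M) (hbk : b + k ≤ N) :
    Relation.ReflTransGen (GridEdge M N) (a, b) (a, b + k) := by
  induction k with
  | zero => exact .refl
  | succ k ih => exact (ih (by omega)).tail (Or.inr ⟨ha, by omega, rfl⟩)

theorem reflTransGen_of_le {u w : ℕ × ℕ} (huw : u ≤ w) (hwM : w.1 ≤ M) (hwN : w.2 ≤ N) :
    Relation.ReflTransGen (GridEdge M N) u w := by
  obtain ⟨hac, hbd⟩ := huw
  have south := reflTransGen_south (M := M) (N := N) u.1 u.2 (w.1 - u.1) (by omega) (by omega)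
  have east := reflTransGen_east (M := M) (N := N) w.1 u.2 (w.2 - u.2) hwM (by omega)
  rw [Nat.add_sub_cancel' hac] at south
  rw [Nat.add_sub_cancel' hbd] at east
  exact south.trans east

theorem reflTransGen_origin {u v : ℕ × ℕ} (h : GridEdge M N u v) :
    Relation.ReflTransGen (GridEdge M N) (0, 0) u :=
  reflTransGen_of_le (Prod.mk_le_mk.2 ⟨u.1.zero_le, u.2.zero_le⟩) h.source_le.1 h.source_le.2

end GridEdge

theorem not_isSouth_and_isEast (u v : ℕ × ℕ) : ¬ (IsSouth u v ∧ IsEast u v) := by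
  rintro ⟨hs, he⟩
  rw [IsSouth, he, Prod.mk.injEq] at hs
  omega

theorem DirectedConvex.isSouth_iff_of_origin {M N : ℕ} {σ : ℕ × ℕ → ℕ × ℕ → Set ℕ}
    (hconv : DirectedConvex M N σ) {lam : ℕ} {w u v : ℕ × ℕ}
    (hw : GridEdge M N (0, 0) w) (hlw : lam ∈ σ (0, 0) w)
    (he : GridEdge M N u v) (hlu : lam ∈ σ u v) :
    IsSouth (0, 0) w ↔ IsSouth u v :=
  (hconv lam _ _ _ _ _ _ hw hw he .refl he.reflTransGen_origin hlw hlu).1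

theorem directedConvex_backwardClosed_same_direction_general
    (M N : ℕ) (Sig : Finset ℕ)
    (σ : ℕ × ℕ → ℕ × ℕ → Set ℕ)
    (hconv : DirectedConvex M N σ)
    (hback : ∀ lam ∈ Sig, ∃ v, GridEdge M N (0, 0) v ∧ lam ∈ σ (0, 0) v) :
    ∀ lam ∈ Sig, ∀ u v u' v' : ℕ × ℕ,
      GridEdge M N u v → GridEdge M N u' v' →
      lam ∈ σ u v → lam ∈ σ u' v' →
      ((IsSouth u v ↔ IsSouth u' v') ∧ ¬ (IsSouth u v ∧ IsEast u' v')) := by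
  intro lam hlam u v u' v' he he' hl hl'
  obtain ⟨w, hw, hlw⟩ := hback lam hlam
  have same_dir : IsSouth u v ↔ IsSouth u' v' :=
    (hconv.isSouth_iff_of_origin hw hlw he hl).symm.trans
      (hconv.isSouth_iff_of_origin hw hlw he' hl')
  exact ⟨same_dir, fun ⟨hs, hE⟩ => not_isSouth_and_isEast u' v' ⟨same_dir.1 hs, hE⟩⟩

/-- On a complete `M × N` layered grid graph with `M, N ≥ 1` and a labeling with finite
alphabet `Sig` that is directed convex and backward closed (every label appears on some
edge leaving `(0,0)`), all edges whose label set contains a given label `lam ∈ Sig` have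
the same direction; in particular, no label appears on both a south and an east edge. -/
theorem directedConvex_backwardClosed_same_direction
    (M N : ℕ) (hM : 1 ≤ M) (hN : 1 ≤ N) (Sig : Finset ℕ)
    (σ : ℕ × ℕ → ℕ × ℕ → Set ℕ)
    (hsub : ∀ u v, GridEdge M N u v → σ u v ⊆ ↑Sig)
    (hconv : DirectedConvex M N σ)
    (hback : ∀ lam ∈ Sig, ∃ v, GridEdge M N (0, 0) v ∧ lam ∈ σ (0, 0) v) :
    ∀ lam ∈ Sig, ∀ u v u' v' : ℕ × ℕ,
      GridEdge M N u v → GridEdge M N u' v' →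
      lam ∈ σ u v → lam ∈ σ u' v' →
      ((IsSouth u v ↔ IsSouth u' v') ∧ ¬ (IsSouth u v ∧ IsEast u' v')) :=
  directedConvex_backwardClosed_same_direction_general M N Sig σ hconv hback
end

section
/- A column λ ∈ [n] of X ∈ ℕ^{m×n} (with m ≥ 1) is eliminable if and only if there exists a matched path in the induced labeled layered grid graph (G_X, σ_X) starting at the vertex (0,0) whose matching map f takes the value λ on some step. -/
/-! A sequence of directions `r` (`false` = south, `true` = east) traces a unique monotone lattice
path from `(0,0)`; before step `i` it stands at `(zᵢ, oᵢ)`, the numbers of `0`s and `1`s among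
`r₁,…,r_{i-1}`. So the interval `[zᵢ+1, m-oᵢ]` of an elimination sequence is exactly the interval
read off by `σ_X` on the `i`-th edge of this path, and elimination sequences are the same thing as
matched paths from `(0,0)`. The strict inequality in "increasing"/"decreasing" keeps the interval
nondegenerate, which keeps the path inside the `(m-1) × (m-1)` grid. -/

open Finset Function

def gridStep (b : Bool) (u : ℕ × ℕ) : ℕ × ℕ :=
  bif b then (u.1, u.2 + 1) else (u.1 + 1, u.2)

def latticePath {k : ℕ} (r : Fin k → Bool) (j : ℕ) : ℕ × ℕ :=
  (#{t | t.val < j ∧ r t = false}, #{t | t.val < j ∧ r t = true})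

lemma card_filter_val_lt_succ {k : ℕ} (p : Fin k → Prop) [DecidablePred p] (t : Fin k) :
    #{s | s.val < t.val + 1 ∧ p s} = #{s | s.val < t.val ∧ p s} + if p t then 1 else 0 := by
  simp only [card_filter]
  rw [← Fintype.sum_ite_eq' t fun s => if p s then 1 else 0, ← sum_add_distrib]
  refine sum_congr rfl fun s _ => ?_
  rcases lt_trichotomy s.val t.val with h | h | h
  · simp [h, h.trans (Nat.lt_succ_self _), Fin.ne_of_lt h]
  · simp [Fin.ext h]
  · simp [h.not_gt, Nat.not_lt.2 h, (Fin.ne_of_lt h).symm]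

section LatticePath

variable {k : ℕ} (r : Fin k → Bool)

lemma latticePath_zero : latticePath r 0 = (0, 0) := by
  simp [latticePath]

lemma latticePath_succ (t : Fin k) : latticePath r (t + 1) = gridStep (r t) (latticePath r t) := by
  rw [latticePath, latticePath, card_filter_val_lt_succ, card_filter_val_lt_succ]
  cases r t <;> rfl

lemma latticePath_val (i : Fin k) : latticePath r i = (zerosBefore r i, onesBefore r i) := rfl

lemma eq_latticePath_of_step {v : Fin (k + 1) → ℕ × ℕ} (h0 : v 0 = (0, 0))
    (hstep : ∀ t : Fin k, v t.succ = gridStep (r t) (v t.castSucc)) (j : Fin (k + 1)) :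
    v j = latticePath r j := by
  induction j using Fin.induction with
  | zero => rw [h0, Fin.val_zero, latticePath_zero]
  | succ t ih => rw [hstep, ih, Fin.val_succ, Fin.val_castSucc, latticePath_succ]

end LatticePath

lemma exists_eq_gridStep_of_gridEdge {M N : ℕ} {u v : ℕ × ℕ} (h : GridEdge M N u v) :
    ∃ b, v = gridStep b u := by
  rcases h with ⟨-, -, hs⟩ | ⟨-, -, he⟩
  exacts [⟨false, hs⟩, ⟨true, he⟩]

lemma ColIncr.lt {m : ℕ} {X : ℕ → ℕ → ℕ} {k i j : ℕ} (h : ColIncr m X k i j) : i < j :=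
  h.2.1.lt_of_ne fun hij => (hij ▸ h.2.2.2.2).false

lemma ColDecr.lt {m : ℕ} {X : ℕ → ℕ → ℕ} {k i j : ℕ} (h : ColDecr m X k i j) : i < j :=
  h.2.1.lt_of_ne fun hij => (hij ▸ h.2.2.2.2).false

section Labels

variable {m n : ℕ} {X : ℕ → ℕ → ℕ} {lam : ℕ}

lemma gridEdge_of_mem_sigmaX {u v : ℕ × ℕ} (h : lam ∈ sigmaX m n X u v) :
    GridEdge (m - 1) (m - 1) u v := by
  rcases h.2 with ⟨hs, hcol⟩ | ⟨he, hcol⟩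
  · have := hcol.lt
    exact Or.inl ⟨by omega, by omega, hs⟩
  · have := hcol.lt
    exact Or.inr ⟨by omega, by omega, he⟩

lemma mem_sigmaX_gridStep_iff (b : Bool) (u : ℕ × ℕ) :
    lam ∈ sigmaX m n X u (gridStep b u) ↔ lam ∈ Icc 1 n ∧
      (b = false → ColIncr m X lam (u.1 + 1) (m - u.2)) ∧
      (b = true → ColDecr m X lam (u.1 + 1) (m - u.2)) := by
  cases b <;> simp [sigmaX, IsSouth, IsEast, gridStep]

lemma isElimSeq_iff {k : ℕ} {c : Fin k → ℕ} {r : Fin k → Bool} :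
    IsElimSeq m n X c r ↔
      Injective c ∧ ∀ i : Fin k, c i ∈ sigmaX m n X (latticePath r i) (latticePath r (i + 1)) := by
  simp only [IsElimSeq, latticePath_succ, mem_sigmaX_gridStep_iff, latticePath_val, forall_and]
  tauto

end Labels

theorem eliminable_iff_matchedPath_uses_label_general
    (m n : ℕ) (X : ℕ → ℕ → ℕ) (lam : ℕ) :
    Eliminable m n X lam ↔
      ∃ (k : ℕ) (v : Fin (k + 1) → ℕ × ℕ) (f : Fin k → ℕ),
        v 0 = (0, 0) ∧
        (∀ t : Fin k, GridEdge (m - 1) (m - 1) (v t.castSucc) (v t.succ)) ∧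
        Function.Injective f ∧
        (∀ t : Fin k, f t ∈ sigmaX m n X (v t.castSucc) (v t.succ)) ∧
        (∃ t : Fin k, f t = lam) := by
  constructor
  · rintro ⟨k, c, r, hseq, hlam⟩
    obtain ⟨hinj, hlab⟩ := isElimSeq_iff.1 hseq
    exact ⟨k, fun j => latticePath r j, c, latticePath_zero r,
      fun t => gridEdge_of_mem_sigmaX (hlab t), hinj, hlab, hlam⟩
  · rintro ⟨k, v, f, h0, hedge, hinj, hlab, hlam⟩
    choose r hr using fun t => exists_eq_gridStep_of_gridEdge (hedge t)
    have hv := eq_latticePath_of_step r h0 hr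
    refine ⟨k, f, r, isElimSeq_iff.2 ⟨hinj, fun t => ?_⟩, hlam⟩
    simpa only [hv, Fin.val_castSucc, Fin.val_succ] using hlab t

/-- A column `lam` of `X ∈ ℕ^{m×n}` (with `m ≥ 1`) is eliminable iff some matched path in
the induced labeled layered grid graph `(G_X, σ_X)` starting at `(0,0)` uses label `lam`
on some step. -/
theorem eliminable_iff_matchedPath_uses_label
    (m n : ℕ) (hm : 1 ≤ m) (X : ℕ → ℕ → ℕ) (lam : ℕ) :
    Eliminable m n X lam ↔
      ∃ (k : ℕ) (v : Fin (k + 1) → ℕ × ℕ) (f : Fin k → ℕ),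
        v 0 = (0, 0) ∧
        (∀ t : Fin k, GridEdge (m - 1) (m - 1) (v t.castSucc) (v t.succ)) ∧
        Function.Injective f ∧
        (∀ t : Fin k, f t ∈ sigmaX m n X (v t.castSucc) (v t.succ)) ∧
        (∃ t : Fin k, f t = lam) :=
  eliminable_iff_matchedPath_uses_label_general m n X lam
end

section
/- In the self-anonymous two-action game Γ with n players and payoffs p_1,…,p_n : {0,…,n} → ℝ, let S₀, S₁ ⊆ [n] be disjoint sets of players restricted to actions 0 and 1 respectively, and let j ∉ S₀ ∪ S₁. Then action 1 of player j is weakly dominated by action 0 in the corresponding subgame if and only if p_j(x+1) ≤ p_j(x) for every integer x with |S₁| ≤ x ≤ n−1−|S₀| and p_j(x+1) < p_j(x) for at least one such x. Symmetrically, action 0 of player j is weakly dominated by action 1 in the subgame if and only if p_j(x+1) ≥ p_j(x) for every such x, with strict inequality for at least one such x. -/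
/-- An action profile `b` respects the restrictions of the subgame `(S₀, S₁)`:
players in `S₀` play action `0` (`false`) and players in `S₁` play action `1` (`true`). -/
def Respects (S₀ S₁ : Finset ℕ) (b : ℕ → Bool) : Prop :=
  (∀ i ∈ S₀, b i = false) ∧ (∀ i ∈ S₁, b i = true)

/-- The number of players other than `j` (among players `1,…,n`) playing action `1`
in profile `b`. -/
def othersCount (n j : ℕ) (b : ℕ → Bool) : ℕ :=
  (((Finset.Icc 1 n).erase j).filter fun i => b i = true).card

/-- In the self-anonymous two-action game with `n` players and payoffs `p j t` (payoff of
player `j` when `t` players in total play action `1`), action `a` of player `j` is weakly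
dominated by action `1 - a` in the subgame `(S₀, S₁)`: against every profile of the other
players respecting the restrictions, playing `1 - a` is at least as good as playing `a`,
and strictly better against at least one such profile. -/
def DominatedBy (n : ℕ) (p : ℕ → ℕ → ℝ) (S₀ S₁ : Finset ℕ) (j : ℕ) (a : Bool) : Prop :=
  (∀ b : ℕ → Bool, Respects S₀ S₁ b →
     p j (othersCount n j b + (if a then 1 else 0)) ≤
       p j (othersCount n j b + (if a then 0 else 1))) ∧
  (∃ b : ℕ → Bool, Respects S₀ S₁ b ∧
     p j (othersCount n j b + (if a then 1 else 0)) <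
       p j (othersCount n j b + (if a then 0 else 1)))

lemma count_mem_range (n : ℕ) (S₀ S₁ : Finset ℕ)
    (hS₀ : S₀ ⊆ Finset.Icc 1 n) (hS₁ : S₁ ⊆ Finset.Icc 1 n)
    (j : ℕ) (hj : j ∈ Finset.Icc 1 n) (hj₀ : j ∉ S₀) (hj₁ : j ∉ S₁)
    (b : ℕ → Bool) (hb : Respects S₀ S₁ b) :
    S₁.card ≤ othersCount n j b ∧ othersCount n j b ≤ n - 1 - S₀.card := by
  have hE : ((Finset.Icc 1 n).erase j).card = n - 1 := by
    rw [Finset.card_erase_of_mem hj, Nat.card_Icc]; omega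
  constructor
  · apply Finset.card_le_card
    intro i hi
    simp only [Finset.mem_filter, Finset.mem_erase]
    exact ⟨⟨fun h => hj₁ (h ▸ hi), hS₁ hi⟩, hb.2 i hi⟩
  · have hsub : (((Finset.Icc 1 n).erase j).filter fun i => b i = true)
        ⊆ ((Finset.Icc 1 n).erase j) \ S₀ := by
      intro i hi
      simp only [Finset.mem_filter] at hi
      simp only [Finset.mem_sdiff]
      refine ⟨hi.1, fun h => ?_⟩
      have := hb.1 i h
      simp [this] at hi
    calc othersCount n j b ≤ (((Finset.Icc 1 n).erase j) \ S₀).card :=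
          Finset.card_le_card hsub
      _ = n - 1 - S₀.card := by
          rw [Finset.card_sdiff_of_subset, hE]
          intro i hi
          exact Finset.mem_erase.2 ⟨fun h => hj₀ (h ▸ hi), hS₀ hi⟩

lemma count_exists (n : ℕ) (S₀ S₁ : Finset ℕ)
    (hS₀ : S₀ ⊆ Finset.Icc 1 n) (hS₁ : S₁ ⊆ Finset.Icc 1 n) (hdisj : Disjoint S₀ S₁)
    (j : ℕ) (hj : j ∈ Finset.Icc 1 n) (hj₀ : j ∉ S₀) (hj₁ : j ∉ S₁)
    (x : ℕ) (h1 : S₁.card ≤ x) (h2 : x ≤ n - 1 - S₀.card) :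
    ∃ b, Respects S₀ S₁ b ∧ othersCount n j b = x := by
  set E := (Finset.Icc 1 n).erase j with hEdef
  have hE : E.card = n - 1 := by
    rw [hEdef, Finset.card_erase_of_mem hj, Nat.card_Icc]; omega
  have hS₀E : S₀ ⊆ E := fun i hi => Finset.mem_erase.2 ⟨fun h => hj₀ (h ▸ hi), hS₀ hi⟩
  have hS₁E : S₁ ⊆ E := fun i hi => Finset.mem_erase.2 ⟨fun h => hj₁ (h ▸ hi), hS₁ hi⟩
  have hS₁E' : S₁ ⊆ E \ S₀ := fun i hi => Finset.mem_sdiff.2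
    ⟨hS₁E hi, fun h => (Finset.disjoint_left.1 hdisj h) hi⟩
  have hcardT : ((E \ S₀) \ S₁).card = n - 1 - S₀.card - S₁.card := by
    rw [Finset.card_sdiff_of_subset hS₁E', Finset.card_sdiff_of_subset hS₀E, hE]
  have hle : x - S₁.card ≤ ((E \ S₀) \ S₁).card := by
    rw [hcardT]; omega
  obtain ⟨U, hUsub, hUcard⟩ := Finset.exists_subset_card_eq hle
  refine ⟨fun i => decide (i ∈ S₁ ∪ U), ?_, ?_⟩
  · constructor
    · intro i hi
      simp only [decide_eq_false_iff_not, Finset.mem_union, not_or]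
      constructor
      · exact fun h => (Finset.disjoint_left.1 hdisj hi) h
      · intro h
        have := hUsub h
        simp only [Finset.mem_sdiff] at this
        exact this.1.2 hi
    · intro i hi
      simp [hi]
  · have hfil : (E.filter fun i => decide (i ∈ S₁ ∪ U) = true) = S₁ ∪ U := by
      apply Finset.ext
      intro i
      simp only [Finset.mem_filter, decide_eq_true_eq]
      constructor
      · exact fun h => h.2
      · intro h
        refine ⟨?_, h⟩
        rcases Finset.mem_union.1 h with h' | h'
        · exact hS₁E h'
        · have := hUsub h'
          simp only [Finset.mem_sdiff] at this
          exact this.1.1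
    have hdisjU : Disjoint S₁ U := by
      refine Finset.disjoint_left.2 fun i hi hU => ?_
      have := hUsub hU
      simp only [Finset.mem_sdiff] at this
      exact this.2 hi
    show (E.filter fun i => decide (i ∈ S₁ ∪ U) = true).card = x
    rw [hfil, Finset.card_union_of_disjoint hdisjU, hUcard]
    omega

/-- Characterization of weak dominance in the two-action self-anonymous game: action `1`
of player `j` is weakly dominated by action `0` in the subgame `(S₀, S₁)` iff
`p j (x+1) ≤ p j x` for all `x` with `|S₁| ≤ x ≤ n - 1 - |S₀|`, with strict inequality for
some such `x`; and symmetrically for action `0` dominated by action `1`. -/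
theorem dominated_iff_monotone_on_range
    (n : ℕ) (p : ℕ → ℕ → ℝ) (S₀ S₁ : Finset ℕ)
    (hS₀ : S₀ ⊆ Finset.Icc 1 n) (hS₁ : S₁ ⊆ Finset.Icc 1 n) (hdisj : Disjoint S₀ S₁)
    (j : ℕ) (hj : j ∈ Finset.Icc 1 n) (hj₀ : j ∉ S₀) (hj₁ : j ∉ S₁) :
    (DominatedBy n p S₀ S₁ j true ↔
      ((∀ x : ℕ, S₁.card ≤ x → x ≤ n - 1 - S₀.card → p j (x + 1) ≤ p j x) ∧
       (∃ x : ℕ, S₁.card ≤ x ∧ x ≤ n - 1 - S₀.card ∧ p j (x + 1) < p j x))) ∧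
    (DominatedBy n p S₀ S₁ j false ↔
      ((∀ x : ℕ, S₁.card ≤ x → x ≤ n - 1 - S₀.card → p j x ≤ p j (x + 1)) ∧
       (∃ x : ℕ, S₁.card ≤ x ∧ x ≤ n - 1 - S₀.card ∧ p j x < p j (x + 1)))) := by
  have key : ∀ a : Bool, DominatedBy n p S₀ S₁ j a ↔
      ((∀ x : ℕ, S₁.card ≤ x → x ≤ n - 1 - S₀.card →
          p j (x + (if a then 1 else 0)) ≤ p j (x + (if a then 0 else 1))) ∧
       (∃ x : ℕ, S₁.card ≤ x ∧ x ≤ n - 1 - S₀.card ∧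
          p j (x + (if a then 1 else 0)) < p j (x + (if a then 0 else 1)))) := by
    intro a
    constructor
    · rintro ⟨hall, b, hb, hlt⟩
      refine ⟨fun x hx1 hx2 => ?_, ?_⟩
      · obtain ⟨b, hb, rfl⟩ := count_exists n S₀ S₁ hS₀ hS₁ hdisj j hj hj₀ hj₁ x hx1 hx2
        exact hall b hb
      · obtain ⟨h1, h2⟩ := count_mem_range n S₀ S₁ hS₀ hS₁ j hj hj₀ hj₁ b hb
        exact ⟨othersCount n j b, h1, h2, hlt⟩
    · rintro ⟨hall, x, hx1, hx2, hlt⟩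
      refine ⟨fun b hb => ?_, ?_⟩
      · obtain ⟨h1, h2⟩ := count_mem_range n S₀ S₁ hS₀ hS₁ j hj hj₀ hj₁ b hb
        exact hall _ h1 h2
      · obtain ⟨b, hb, rfl⟩ := count_exists n S₀ S₁ hS₀ hS₁ hdisj j hj hj₀ hj₁ x hx1 hx2
        exact ⟨b, hb, hlt⟩
  constructor
  · rw [key true]; simp
  · rw [key false]; simp
end

section
/- Let Γ be the self-anonymous two-action game with n ≥ 1 players and payoffs p_1,…,p_n : {0,…,n} → ℝ, and let X_Γ ∈ ℝ^{(n+1)×n} be the matrix with entries x_{i,j} = p_j(i−1). Then Γ is solvable by stepwise iterated weak dominance if and only if X_Γ admits an elimination sequence of length n. -/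
/-- Column `k` of the real matrix `X` (with `m` rows, 1-indexed) is increasing in the
interval `[i,j] ⊆ [m]`. -/
def ColIncrR (m : ℕ) (X : ℕ → ℕ → ℝ) (k i j : ℕ) : Prop :=
  1 ≤ i ∧ i ≤ j ∧ j ≤ m ∧ (∀ a, i ≤ a → a < j → X a k ≤ X (a + 1) k) ∧ X i k < X j k

/-- Column `k` of the real matrix `X` is decreasing in the interval `[i,j] ⊆ [m]`. -/
def ColDecrR (m : ℕ) (X : ℕ → ℕ → ℝ) (k i j : ℕ) : Prop :=
  1 ≤ i ∧ i ≤ j ∧ j ≤ m ∧ (∀ a, i ≤ a → a < j → X (a + 1) k ≤ X a k) ∧ X j k < X i k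

/-- `(c, r)` is an elimination sequence for the real matrix `X ∈ ℝ^{m×n}`. -/
def IsElimSeqR (m n : ℕ) (X : ℕ → ℕ → ℝ) {kk : ℕ} (c : Fin kk → ℕ) (r : Fin kk → Bool) : Prop :=
  (∀ i, c i ∈ Finset.Icc 1 n) ∧ Function.Injective c ∧
  ∀ i : Fin kk,
    (r i = false → ColIncrR m X (c i) (zerosBefore r i + 1) (m - onesBefore r i)) ∧
    (r i = true → ColDecrR m X (c i) (zerosBefore r i + 1) (m - onesBefore r i))

/-- Players restricted to action `0`: those eliminated earlier with eliminated action `1`. -/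
def restrictedToZero {kk : ℕ} (j : Fin kk → ℕ) (a : Fin kk → Bool) (t : Fin kk) : Finset ℕ :=
  (Finset.univ.filter fun s : Fin kk => s < t ∧ a s = true).image j

/-- Players restricted to action `1`: those eliminated earlier with eliminated action `0`. -/
def restrictedToOne {kk : ℕ} (j : Fin kk → ℕ) (a : Fin kk → Bool) (t : Fin kk) : Finset ℕ :=
  (Finset.univ.filter fun s : Fin kk => s < t ∧ a s = false).image j

/-- `(j, a)` is a stepwise elimination sequence of the self-anonymous two-action game with
`n` players and payoffs `p`: the players `j t ∈ [n]` are pairwise distinct, and at each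
step `t`, action `a t` of player `j t` is weakly dominated by action `1 - a t` in the
subgame in which each earlier player `j s` is restricted to action `1 - a s`. -/
def IsStepwiseElim (n : ℕ) (p : ℕ → ℕ → ℝ) {kk : ℕ} (j : Fin kk → ℕ) (a : Fin kk → Bool) : Prop :=
  (∀ t, j t ∈ Finset.Icc 1 n) ∧ Function.Injective j ∧
  ∀ t, DominatedBy n p (restrictedToZero j a t) (restrictedToOne j a t) (j t) (a t)

section Helpers

private lemma chainR (f : ℕ → ℝ) {i j : ℕ} (h : ∀ a, i ≤ a → a < j → f a ≤ f (a + 1)) :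
    ∀ u v, i ≤ u → u ≤ v → v ≤ j → f u ≤ f v := by
  intro u v hu huv
  induction v, huv using Nat.le_induction with
  | base => intro _; exact le_rfl
  | succ v hv ih =>
    intro hvj
    exact le_trans (ih (by omega)) (h v (by omega) (by omega))

private lemma exists_strict (f : ℕ → ℝ) {i j : ℕ}
    (h : ∀ a, i ≤ a → a < j → f a ≤ f (a + 1)) (hij : i ≤ j) (hlt : f i < f j) :
    ∃ a, i ≤ a ∧ a < j ∧ f a < f (a + 1) := by
  by_contra hc
  push_neg at hc
  have key : -f i ≤ -f j := by
    refine chainR (fun a => -f a) (i := i) (j := j) ?_ i j le_rfl hij le_rfl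
    intro a ha haj
    have h1 := hc a ha haj
    simp only [neg_le_neg_iff]
    exact h1
  linarith

private lemma count_range {n jt : ℕ} (hjt : jt ∈ Finset.Icc 1 n)
    {S₀ S₁ : Finset ℕ} (hS₀ : S₀ ⊆ (Finset.Icc 1 n).erase jt)
    {b : ℕ → Bool} (hb : Respects S₀ S₁ b)
    (hS₁ : S₁ ⊆ (Finset.Icc 1 n).erase jt) :
    S₁.card ≤ othersCount n jt b ∧ othersCount n jt b ≤ n - 1 - S₀.card := by
  have hcardE : ((Finset.Icc 1 n).erase jt).card = n - 1 := by
    rw [Finset.card_erase_of_mem hjt, Nat.card_Icc]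
    omega
  constructor
  · apply Finset.card_le_card
    intro i hi
    simp only [Finset.mem_filter]
    exact ⟨hS₁ hi, hb.2 i hi⟩
  · have h1 : (((Finset.Icc 1 n).erase jt).filter fun i => b i = true)
        ⊆ ((Finset.Icc 1 n).erase jt) \ S₀ := by
      intro i hi
      simp only [Finset.mem_filter] at hi
      simp only [Finset.mem_sdiff]
      refine ⟨hi.1, fun h0 => ?_⟩
      have := hb.1 i h0
      rw [this] at hi
      exact absurd hi.2 (by simp)
    calc othersCount n jt b ≤ (((Finset.Icc 1 n).erase jt) \ S₀).card :=
          Finset.card_le_card h1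
      _ = ((Finset.Icc 1 n).erase jt).card - S₀.card := Finset.card_sdiff_of_subset hS₀
      _ = n - 1 - S₀.card := by rw [hcardE]

private lemma exists_profile {n jt : ℕ} (hjt : jt ∈ Finset.Icc 1 n)
    {S₀ S₁ : Finset ℕ} (hS₀ : S₀ ⊆ (Finset.Icc 1 n).erase jt)
    (hS₁ : S₁ ⊆ (Finset.Icc 1 n).erase jt) (hd : Disjoint S₀ S₁)
    {k : ℕ} (hk1 : S₁.card ≤ k) (hk2 : k ≤ n - 1 - S₀.card) :
    ∃ b : ℕ → Bool, Respects S₀ S₁ b ∧ othersCount n jt b = k := by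
  set E := (Finset.Icc 1 n).erase jt with hE
  have hcardE : E.card = n - 1 := by
    rw [hE, Finset.card_erase_of_mem hjt, Nat.card_Icc]
    omega
  have hsub : S₀ ∪ S₁ ⊆ E := Finset.union_subset hS₀ hS₁
  have hF : (E \ (S₀ ∪ S₁)).card = n - 1 - S₀.card - S₁.card := by
    rw [Finset.card_sdiff_of_subset hsub, Finset.card_union_of_disjoint hd, hcardE]
    omega
  obtain ⟨T, hTsub, hTcard⟩ :=
    Finset.exists_subset_card_eq (s := E \ (S₀ ∪ S₁)) (n := k - S₁.card) (by omega)
  have hTE : T ⊆ E := fun i hi => (Finset.mem_sdiff.mp (hTsub hi)).1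
  have hTnot : ∀ i ∈ T, i ∉ S₀ ∪ S₁ := fun i hi => (Finset.mem_sdiff.mp (hTsub hi)).2
  refine ⟨fun i => decide (i ∈ S₁ ∪ T), ⟨?_, ?_⟩, ?_⟩
  · intro i hi
    simp only [decide_eq_false_iff_not, Finset.mem_union]
    rintro (h1 | h1)
    · exact (Finset.disjoint_left.mp hd hi) h1
    · exact hTnot i h1 (Finset.mem_union_left _ hi)
  · intro i hi
    simp [Finset.mem_union, hi]
  · have hset : (E.filter fun i => decide (i ∈ S₁ ∪ T) = true) = S₁ ∪ T := by
      ext i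
      simp only [Finset.mem_filter, decide_eq_true_eq]
      constructor
      · exact fun h => h.2
      · intro h
        refine ⟨?_, h⟩
        rcases Finset.mem_union.mp h with h1 | h1
        · exact hS₁ h1
        · exact hTE h1
    have hdST : Disjoint S₁ T := by
      rw [Finset.disjoint_left]
      intro i hi hiT
      exact hTnot i hiT (Finset.mem_union_right _ hi)
    show (E.filter fun i => decide (i ∈ S₁ ∪ T) = true).card = k
    rw [hset, Finset.card_union_of_disjoint hdST, hTcard]
    omega

private lemma forall_count {n jt : ℕ} (hjt : jt ∈ Finset.Icc 1 n)
    {S₀ S₁ : Finset ℕ} (hS₀ : S₀ ⊆ (Finset.Icc 1 n).erase jt)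
    (hS₁ : S₁ ⊆ (Finset.Icc 1 n).erase jt) (hd : Disjoint S₀ S₁) (Q : ℕ → Prop) :
    (∀ b, Respects S₀ S₁ b → Q (othersCount n jt b)) ↔
      (∀ k, S₁.card ≤ k → k ≤ n - 1 - S₀.card → Q k) := by
  constructor
  · intro h k hk1 hk2
    obtain ⟨b, hb, hc⟩ := exists_profile hjt hS₀ hS₁ hd hk1 hk2
    exact hc ▸ h b hb
  · intro h b hb
    obtain ⟨h1, h2⟩ := count_range hjt hS₀ hb hS₁
    exact h _ h1 h2

private lemma exists_count {n jt : ℕ} (hjt : jt ∈ Finset.Icc 1 n)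
    {S₀ S₁ : Finset ℕ} (hS₀ : S₀ ⊆ (Finset.Icc 1 n).erase jt)
    (hS₁ : S₁ ⊆ (Finset.Icc 1 n).erase jt) (hd : Disjoint S₀ S₁) (Q : ℕ → Prop) :
    (∃ b, Respects S₀ S₁ b ∧ Q (othersCount n jt b)) ↔
      (∃ k, S₁.card ≤ k ∧ k ≤ n - 1 - S₀.card ∧ Q k) := by
  constructor
  · rintro ⟨b, hb, hQ⟩
    obtain ⟨h1, h2⟩ := count_range hjt hS₀ hb hS₁
    exact ⟨_, h1, h2, hQ⟩
  · rintro ⟨k, hk1, hk2, hQ⟩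
    obtain ⟨b, hb, hc⟩ := exists_profile hjt hS₀ hS₁ hd hk1 hk2
    exact ⟨b, hb, hc ▸ hQ⟩

private lemma colIncr_iff (n jt : ℕ) (p : ℕ → ℕ → ℝ) (z o : ℕ) (hsum : o + z + 1 ≤ n) :
    ColIncrR (n + 1) (fun i j => p j (i - 1)) jt (z + 1) (n + 1 - o) ↔
      ((∀ k, z ≤ k → k ≤ n - 1 - o → p jt k ≤ p jt (k + 1)) ∧
        ∃ k, z ≤ k ∧ k ≤ n - 1 - o ∧ p jt k < p jt (k + 1)) := by
  unfold ColIncrR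
  constructor
  · rintro ⟨h1, h2, h3, hmono, hstrict⟩
    constructor
    · intro k hk1 hk2
      have := hmono (k + 1) (by omega) (by omega)
      simpa using this
    · obtain ⟨a, ha1, ha2, ha3⟩ :=
        exists_strict (fun a => p jt (a - 1)) hmono h2 hstrict
      obtain ⟨k, rfl⟩ : ∃ k, a = k + 1 := ⟨a - 1, by omega⟩
      exact ⟨k, by omega, by omega, by simpa using ha3⟩
  · rintro ⟨hm, k0, hk01, hk02, hstr⟩
    have gmono : ∀ a, z + 1 ≤ a → a < n + 1 - o →
        (fun a => p jt (a - 1)) a ≤ (fun a => p jt (a - 1)) (a + 1) := by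
      intro a ha1 ha2
      obtain ⟨k, rfl⟩ : ∃ k, a = k + 1 := ⟨a - 1, by omega⟩
      simpa using hm k (by omega) (by omega)
    refine ⟨by omega, by omega, by omega, gmono, ?_⟩
    have c1 : (fun a => p jt (a - 1)) (z + 1) ≤ (fun a => p jt (a - 1)) (k0 + 1) :=
      chainR _ gmono (z + 1) (k0 + 1) le_rfl (by omega) (by omega)
    have c2 : (fun a => p jt (a - 1)) (k0 + 2) ≤ (fun a => p jt (a - 1)) (n + 1 - o) :=
      chainR _ gmono (k0 + 2) (n + 1 - o) (by omega) (by omega) le_rfl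
    simp only at c1 c2 ⊢
    have e1 : k0 + 1 - 1 = k0 := by omega
    have e2 : k0 + 2 - 1 = k0 + 1 := by omega
    rw [e1] at c1
    rw [e2] at c2
    linarith

private lemma colDecr_iff (n jt : ℕ) (p : ℕ → ℕ → ℝ) (z o : ℕ) (hsum : o + z + 1 ≤ n) :
    ColDecrR (n + 1) (fun i j => p j (i - 1)) jt (z + 1) (n + 1 - o) ↔
      ((∀ k, z ≤ k → k ≤ n - 1 - o → p jt (k + 1) ≤ p jt k) ∧
        ∃ k, z ≤ k ∧ k ≤ n - 1 - o ∧ p jt (k + 1) < p jt k) := by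
  have base := colIncr_iff n jt (fun j k => -(p j k)) z o hsum
  have hneg : ColDecrR (n + 1) (fun i j => p j (i - 1)) jt (z + 1) (n + 1 - o) ↔
      ColIncrR (n + 1) (fun i j => -(p j (i - 1))) jt (z + 1) (n + 1 - o) := by
    unfold ColDecrR ColIncrR
    constructor
    · rintro ⟨h1, h2, h3, h4, h5⟩
      exact ⟨h1, h2, h3, fun a ha1 ha2 => by simpa using h4 a ha1 ha2, by simpa using h5⟩
    · rintro ⟨h1, h2, h3, h4, h5⟩
      exact ⟨h1, h2, h3, fun a ha1 ha2 => by simpa using h4 a ha1 ha2, by simpa using h5⟩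
  rw [hneg, base]
  constructor
  · rintro ⟨h1, k, hk1, hk2, hk3⟩
    exact ⟨fun k hk1 hk2 => by simpa using h1 k hk1 hk2, k, hk1, hk2, by simpa using hk3⟩
  · rintro ⟨h1, k, hk1, hk2, hk3⟩
    exact ⟨fun k hk1 hk2 => by simpa using h1 k hk1 hk2, k, hk1, hk2, by simpa using hk3⟩

private lemma step_iff (n : ℕ) (p : ℕ → ℕ → ℝ) (jt : ℕ) (hjt : jt ∈ Finset.Icc 1 n)
    {S₀ S₁ : Finset ℕ} (hS₀ : S₀ ⊆ (Finset.Icc 1 n).erase jt)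
    (hS₁ : S₁ ⊆ (Finset.Icc 1 n).erase jt) (hd : Disjoint S₀ S₁)
    (hsum : S₀.card + S₁.card + 1 ≤ n) (act : Bool) :
    DominatedBy n p S₀ S₁ jt act ↔
      ((act = false → ColIncrR (n + 1) (fun i j => p j (i - 1)) jt (S₁.card + 1)
          (n + 1 - S₀.card)) ∧
       (act = true → ColDecrR (n + 1) (fun i j => p j (i - 1)) jt (S₁.card + 1)
          (n + 1 - S₀.card))) := by
  cases act with
  | false =>
    simp only [Bool.false_eq_true, IsEmpty.forall_iff, and_true, forall_true_left]
    unfold DominatedBy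
    simp only [Bool.false_eq_true, if_false, add_zero]
    rw [forall_count hjt hS₀ hS₁ hd (fun k => p jt k ≤ p jt (k + 1)),
      exists_count hjt hS₀ hS₁ hd (fun k => p jt k < p jt (k + 1)),
      colIncr_iff n jt p S₁.card S₀.card hsum]
  | true =>
    simp only [Bool.true_eq_false, IsEmpty.forall_iff, true_and, forall_true_left]
    unfold DominatedBy
    simp only [eq_self_iff_true, if_true, add_zero]
    rw [forall_count hjt hS₀ hS₁ hd (fun k => p jt (k + 1) ≤ p jt k),
      exists_count hjt hS₀ hS₁ hd (fun k => p jt (k + 1) < p jt k),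
      colDecr_iff n jt p S₁.card S₀.card hsum]

private lemma zeros_add_ones {kk : ℕ} (r : Fin kk → Bool) (t : Fin kk) :
    zerosBefore r t + onesBefore r t = t.val := by
  unfold zerosBefore onesBefore
  rw [← Finset.card_union_of_disjoint (by
    rw [Finset.disjoint_left]
    intro s hs hs'
    simp only [Finset.mem_filter] at hs hs'
    rw [hs.2.2] at hs'
    exact absurd hs'.2.2 (by simp))]
  have hset : ((Finset.univ.filter fun s : Fin kk => s < t ∧ r s = false) ∪
      (Finset.univ.filter fun s : Fin kk => s < t ∧ r s = true)) = Finset.Iio t := by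
    ext s
    simp only [Finset.mem_union, Finset.mem_filter, Finset.mem_univ, true_and,
      Finset.mem_Iio]
    cases h : r s <;> tauto
  rw [hset, Fin.card_Iio]

private lemma card_rt {kk : ℕ} {j : Fin kk → ℕ} (hinj : Function.Injective j)
    (a : Fin kk → Bool) (t : Fin kk) :
    (restrictedToZero j a t).card = onesBefore a t ∧
      (restrictedToOne j a t).card = zerosBefore a t := by
  unfold restrictedToZero restrictedToOne onesBefore zerosBefore
  rw [Finset.card_image_of_injective _ hinj, Finset.card_image_of_injective _ hinj]
  exact ⟨rfl, rfl⟩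

private lemma rt_subset {kk n : ℕ} {j : Fin kk → ℕ} (hIcc : ∀ t, j t ∈ Finset.Icc 1 n)
    (hinj : Function.Injective j) (a : Fin kk → Bool) (t : Fin kk) (v : Bool) :
    ((Finset.univ.filter fun s : Fin kk => s < t ∧ a s = v).image j) ⊆
      (Finset.Icc 1 n).erase (j t) := by
  intro x hx
  simp only [Finset.mem_image, Finset.mem_filter, Finset.mem_univ, true_and] at hx
  obtain ⟨s, ⟨hst, _⟩, rfl⟩ := hx
  exact Finset.mem_erase.mpr ⟨fun h => (ne_of_lt hst) (hinj h), hIcc s⟩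

private lemma rt0_subset {kk n : ℕ} {j : Fin kk → ℕ} (hIcc : ∀ t, j t ∈ Finset.Icc 1 n)
    (hinj : Function.Injective j) (a : Fin kk → Bool) (t : Fin kk) :
    restrictedToZero j a t ⊆ (Finset.Icc 1 n).erase (j t) := by
  unfold restrictedToZero
  exact rt_subset hIcc hinj a t true

private lemma rt1_subset {kk n : ℕ} {j : Fin kk → ℕ} (hIcc : ∀ t, j t ∈ Finset.Icc 1 n)
    (hinj : Function.Injective j) (a : Fin kk → Bool) (t : Fin kk) :
    restrictedToOne j a t ⊆ (Finset.Icc 1 n).erase (j t) := by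
  unfold restrictedToOne
  exact rt_subset hIcc hinj a t false

private lemma rt_disjoint {kk : ℕ} {j : Fin kk → ℕ} (hinj : Function.Injective j)
    (a : Fin kk → Bool) (t : Fin kk) :
    Disjoint (restrictedToZero j a t) (restrictedToOne j a t) := by
  unfold restrictedToZero restrictedToOne
  rw [Finset.disjoint_image hinj, Finset.disjoint_left]
  intro s hs hs'
  simp only [Finset.mem_filter] at hs hs'
  rw [hs.2.2] at hs'
  exact absurd hs'.2.2 (by simp)

private lemma full_step_iff {n : ℕ} (p : ℕ → ℕ → ℝ) {j : Fin n → ℕ} {a : Fin n → Bool}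
    (hIcc : ∀ t, j t ∈ Finset.Icc 1 n) (hinj : Function.Injective j) (t : Fin n) :
    DominatedBy n p (restrictedToZero j a t) (restrictedToOne j a t) (j t) (a t) ↔
      ((a t = false → ColIncrR (n + 1) (fun i j' => p j' (i - 1)) (j t)
          (zerosBefore a t + 1) (n + 1 - onesBefore a t)) ∧
       (a t = true → ColDecrR (n + 1) (fun i j' => p j' (i - 1)) (j t)
          (zerosBefore a t + 1) (n + 1 - onesBefore a t))) := by
  obtain ⟨hc0, hc1⟩ := card_rt hinj a t
  have hsum : (restrictedToZero j a t).card + (restrictedToOne j a t).card + 1 ≤ n := by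
    rw [hc0, hc1]
    have := zeros_add_ones a t
    have := t.isLt
    omega
  have := step_iff n p (j t) (hIcc t)
    (rt0_subset hIcc hinj a t) (rt1_subset hIcc hinj a t)
    (rt_disjoint hinj a t) hsum (a t)
  rw [hc0, hc1] at this
  exact this

end Helpers

/-- The self-anonymous two-action game with `n ≥ 1` players and payoffs `p` is solvable by
stepwise iterated weak dominance iff the `(n+1) × n` matrix `X_Γ` with entries
`x_{i,j} = p j (i-1)` admits an elimination sequence of length `n`. -/
theorem solvable_iff_matrix_elimination (n : ℕ) (hn : 1 ≤ n) (p : ℕ → ℕ → ℝ) :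
    (∃ (j : Fin n → ℕ) (a : Fin n → Bool), IsStepwiseElim n p j a) ↔
      (∃ (c : Fin n → ℕ) (r : Fin n → Bool),
        IsElimSeqR (n + 1) n (fun i j => p j (i - 1)) c r) := by
  constructor
  · rintro ⟨j, a, hIcc, hinj, hdom⟩
    exact ⟨j, a, hIcc, hinj, fun t => (full_step_iff p hIcc hinj t).mp (hdom t)⟩
  · rintro ⟨c, r, hIcc, hinj, hcol⟩
    exact ⟨c, r, hIcc, hinj, fun t => (full_step_iff p hIcc hinj t).mpr (hcol t)⟩
end
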